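/- arXiv:2302.10372 — 4 statements merged into one kernel-verified Lean document; each statement's English description precedes it below -/
import Mathlib

section
/- With ρ = (√5 − 1)/2 and M = {(x,y) ∈ ℤ² : ρx ≤ y ≤ ρx + 1}, the maps t1(x,y) = (−x−y, −x) and t2(x,y) = (1−x−y, 1−x) map M into M. -/
/-- With ρ = (√5 − 1)/2 and M the set of integer lattice points between or on
the lines y = ρx and y = ρx + 1, the maps t1(x,y) = (−x−y,−x) and
t2(x,y) = (1−x−y,1−x) map M into M. -/
theorem maps_preserve_strip :
    ∀ p : ℤ × ℤ,
      ((Real.sqrt 5 - 1) / 2 * (p.1 : ℝ) ≤ (p.2 : ℝ) ∧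
        (p.2 : ℝ) ≤ (Real.sqrt 5 - 1) / 2 * (p.1 : ℝ) + 1) →
      (((Real.sqrt 5 - 1) / 2 * ((-p.1 - p.2 : ℤ) : ℝ) ≤ ((-p.1 : ℤ) : ℝ) ∧
        ((-p.1 : ℤ) : ℝ) ≤ (Real.sqrt 5 - 1) / 2 * ((-p.1 - p.2 : ℤ) : ℝ) + 1) ∧
      ((Real.sqrt 5 - 1) / 2 * ((1 - p.1 - p.2 : ℤ) : ℝ) ≤ ((1 - p.1 : ℤ) : ℝ) ∧
        ((1 - p.1 : ℤ) : ℝ) ≤ (Real.sqrt 5 - 1) / 2 * ((1 - p.1 - p.2 : ℤ) : ℝ) + 1)) := by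
  intro p ⟨h1, h2⟩
  set r : ℝ := (Real.sqrt 5 - 1) / 2 with hr
  have h5 : Real.sqrt 5 ^ 2 = 5 := Real.sq_sqrt (by norm_num)
  have h5' : (1:ℝ) < Real.sqrt 5 := by
    nlinarith [Real.sqrt_nonneg 5]
  have hrpos : 0 < r := by rw [hr]; linarith
  have hr2 : r ^ 2 = 1 - r := by rw [hr]; nlinarith
  have hrr : r * r = 1 - r := by nlinarith
  have e : r * r * (p.1 : ℝ) = (1 - r) * (p.1 : ℝ) := by rw [hrr]
  have k1 := mul_le_mul_of_nonneg_left h1 hrpos.le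
  have k2 := mul_le_mul_of_nonneg_left h2 hrpos.le
  push_cast
  refine ⟨⟨by nlinarith, by nlinarith⟩, by nlinarith, by nlinarith⟩
end

section
/- For a contractive i.f.s. of invertible maps with attractor A, the set of top addresses Σ_top = τ(A) is shift invariant: σ(Σ_top) = Σ_top. Moreover, for j ∈ Σ_top, σ(j) = τ(π(σ(j))). -/
/-- `compN f j N = f_{j 0} ∘ f_{j 1} ∘ ⋯ ∘ f_{j (N-1)}`. -/
def compN {m : ℕ} {E : Type*} (f : Fin m → E ≃ E) : (ℕ → Fin m) → ℕ → E → E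
  | _, 0 => id
  | j, (N + 1) => f (j 0) ∘ compN f (fun n => j (n + 1)) N

/-- Lexicographic order on `{1,…,m}^ℕ`. -/
def lexLe {m : ℕ} (j k : ℕ → Fin m) : Prop :=
  j = k ∨ ∃ n : ℕ, (∀ i < n, j i = k i) ∧ j n < k n

/-!
The coding map satisfies `π j = f (j 0) (π (σ j))`. Hence if `k` is the top address of `x`,
then `σ k` is the top address of `π (σ k)`: a larger address `k'` of that point would give the
larger address `(k 0) k'` of `x`. Conversely, prepending the largest digit `i` to the top address
of `x` gives the top address of `f i x`: an address of `f i x` starting with a smaller digit is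
smaller, and one starting with `i` has its tail coding `x`, because `f i` is injective.
So `τ x = σ (τ (f i x))`.
-/

section Sequences

variable {α : Type*}

def shift (s : ℕ → α) : ℕ → α := fun n => s (n + 1)

def seqCons (a : α) (s : ℕ → α) : ℕ → α
  | 0 => a
  | n + 1 => s n

@[simp]
lemma shift_seqCons (a : α) (s : ℕ → α) : shift (seqCons a s) = s := rfl

lemma seqCons_head_shift (s : ℕ → α) : seqCons (s 0) (shift s) = s := by
  funext n
  cases n <;> rfl

end Sequences

section Lex

variable {m : ℕ}

lemma lexLe_antisymm {j k : ℕ → Fin m} (hjk : lexLe j k) (hkj : lexLe k j) : j = k := by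
  rcases hjk with rfl | ⟨n, hn, hlt⟩
  · rfl
  rcases hkj with rfl | ⟨n', hn', hlt'⟩
  · exact absurd hlt (lt_irrefl _)
  rcases lt_trichotomy n n' with h | rfl | h
  · exact absurd ((hn' n h).symm ▸ hlt) (lt_irrefl _)
  · exact absurd (hlt.trans hlt') (lt_irrefl _)
  · exact absurd ((hn n' h) ▸ hlt') (lt_irrefl _)

lemma lexLe_of_head_lt {j k : ℕ → Fin m} (h : j 0 < k 0) : lexLe j k :=
  Or.inr ⟨0, fun _ hi => absurd hi (Nat.not_lt_zero _), h⟩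

lemma lexLe_seqCons_iff (i : Fin m) {a b : ℕ → Fin m} :
    lexLe (seqCons i a) (seqCons i b) ↔ lexLe a b := by
  constructor
  · rintro (h | ⟨_ | n, hn, hlt⟩)
    · exact Or.inl (congrArg shift h)
    · exact absurd hlt (lt_irrefl i)
    · exact Or.inr ⟨n, fun k hk => hn (k + 1) (by omega), hlt⟩
  · rintro (rfl | ⟨n, hn, hlt⟩)
    · exact Or.inl rfl
    · refine Or.inr ⟨n + 1, fun k hk => ?_, hlt⟩
      cases k with
      | zero => rfl
      | succ k => exact hn k (by omega)

end Lex

section CodingMap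

variable {X : Type*} {m : ℕ}

lemma mapsTo_compN {f : Fin m → X ≃ X} {A : Set X} (hA : ∀ i, Set.MapsTo (f i) A A)
    (j : ℕ → Fin m) (N : ℕ) : Set.MapsTo (compN f j N) A A := by
  induction N generalizing j with
  | zero => exact Set.mapsTo_id A
  | succ N ih => exact (hA (j 0)).comp (ih (shift j))

variable [TopologicalSpace X] {f : Fin m → X ≃ X} {π : (ℕ → Fin m) → X}

lemma coding_map_mem {A : Set X} (hAc : IsClosed A) (hA : ∀ i, Set.MapsTo (f i) A A)
    {x : X} (hx : x ∈ A) {j : ℕ → Fin m}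
    (hπ : Filter.Tendsto (fun N => compN f j N x) Filter.atTop (nhds (π j))) : π j ∈ A :=
  hAc.mem_of_tendsto hπ (Filter.Eventually.of_forall fun N => mapsTo_compN hA j N hx)

lemma coding_map_eq_apply_shift [T2Space X] (hf : ∀ i, Continuous (f i)) (x : X)
    (hπ : ∀ j, Filter.Tendsto (fun N => compN f j N x) Filter.atTop (nhds (π j)))
    (j : ℕ → Fin m) : π j = f (j 0) (π (shift j)) :=
  tendsto_nhds_unique ((hπ j).comp (Filter.tendsto_add_atTop_nat 1))
    (((hf (j 0)).tendsto _).comp (hπ (shift j)))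

end CodingMap

section TopAddress

variable {X : Type*} {m : ℕ}

def IsTopAddress (π : (ℕ → Fin m) → X) (x : X) (k : ℕ → Fin m) : Prop :=
  π k = x ∧ ∀ k', π k' = x → lexLe k' k

variable {π : (ℕ → Fin m) → X} {x : X} {k : ℕ → Fin m}

lemma IsTopAddress.unique {k' : ℕ → Fin m} (hk : IsTopAddress π x k)
    (hk' : IsTopAddress π x k') : k = k' :=
  lexLe_antisymm (hk'.2 k hk.1) (hk.2 k' hk'.1)

variable {f : Fin m → X → X} (hself : ∀ j, π j = f (j 0) (π (shift j)))
include hself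

lemma IsTopAddress.tail (hk : IsTopAddress π x k) :
    IsTopAddress π (π (shift k)) (shift k) := by
  refine ⟨rfl, fun k' hk' => ?_⟩
  have hcons : π (seqCons (k 0) k') = x := by
    rw [← hk.1, hself k, ← hk', hself (seqCons (k 0) k')]
    rfl
  rw [← lexLe_seqCons_iff (k 0), seqCons_head_shift]
  exact hk.2 _ hcons

lemma IsTopAddress.seqCons_of_forall_le {i : Fin m} (hi : ∀ i', i' ≤ i)
    (hfi : Function.Injective (f i)) (hk : IsTopAddress π x k) :
    IsTopAddress π (f i x) (seqCons i k) := by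
  refine ⟨(hself _).trans (congrArg (f i) hk.1), fun k' hk' => ?_⟩
  rcases (hi (k' 0)).lt_or_eq with hlt | hhead
  · exact lexLe_of_head_lt hlt
  have htail : π (shift k') = x := hfi (by rw [← hk', hself k', hhead])
  rw [← seqCons_head_shift k', hhead, lexLe_seqCons_iff]
  exact hk.2 _ htail

end TopAddress

theorem top_addresses_shift_invariant_general {X : Type*} [MetricSpace X]
    {m : ℕ} (hm : 2 ≤ m) (f : Fin m → X ≃ X)
    (c : ℝ) (hc0 : 0 ≤ c)
    (hlip : ∀ i : Fin m, ∀ x y : X, dist (f i x) (f i y) ≤ c * dist x y)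
    (A : Set X) (hAne : A.Nonempty) (hAcp : IsCompact A)
    (hA : A = ⋃ i : Fin m, (f i : X → X) '' A)
    (π : (ℕ → Fin m) → X)
    (hπ : ∀ (j : ℕ → Fin m) (x : X),
      Filter.Tendsto (fun N => compN f j N x) Filter.atTop (nhds (π j)))
    (τ : X → (ℕ → Fin m))
    (hτ : ∀ x ∈ A, π (τ x) = x ∧ ∀ k : ℕ → Fin m, π k = x → lexLe k (τ x)) :
    ((fun j : ℕ → Fin m => fun n : ℕ => j (n + 1)) '' (τ '' A) = τ '' A) ∧
    (∀ j ∈ τ '' A, (fun n : ℕ => j (n + 1)) = τ (π (fun n : ℕ => j (n + 1)))) := by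
  obtain ⟨x₀, hx₀⟩ := hAne
  have hmaps : ∀ i, Set.MapsTo (f i) A A := fun i x hx =>
    hA ▸ Set.mem_iUnion.2 ⟨i, x, hx, rfl⟩
  have hcont : ∀ i, Continuous (f i) := fun i =>
    (LipschitzWith.of_dist_le_mul (K := ⟨c, hc0⟩) (hlip i)).continuous
  have hself := coding_map_eq_apply_shift hcont x₀ (hπ · x₀)
  have hπA : ∀ j, π j ∈ A := fun j => coding_map_mem hAcp.isClosed hmaps hx₀ (hπ j x₀)
  have hshift : ∀ x ∈ A, shift (τ x) = τ (π (shift (τ x))) := fun x hx =>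
    (IsTopAddress.tail (f := (f ·)) hself (hτ x hx)).unique (hτ _ (hπA _))
  refine ⟨subset_antisymm ?_ ?_, by rintro _ ⟨x, hx, rfl⟩; exact hshift x hx⟩
  · rintro _ ⟨_, ⟨x, hx, rfl⟩, rfl⟩
    exact ⟨_, hπA _, (hshift x hx).symm⟩
  · rintro _ ⟨x, hx, rfl⟩
    obtain ⟨n, rfl⟩ : ∃ n, m = n + 1 := ⟨m - 1, by omega⟩
    have htop := IsTopAddress.seqCons_of_forall_le (f := (f ·)) hself (fun _ => le_top) (f ⊤).injective
      (hτ x hx)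
    exact ⟨_, ⟨_, hmaps ⊤ hx, rfl⟩, by rw [← htop.unique (hτ _ (hmaps ⊤ hx))]; rfl⟩

/-- For a contractive i.f.s. of invertible maps with attractor A, the set of
top addresses Σ_top = τ(A) is shift invariant: σ(Σ_top) = Σ_top; moreover for
j ∈ Σ_top, σ(j) = τ(π(σ(j))). -/
theorem top_addresses_shift_invariant {X : Type*} [MetricSpace X] [CompleteSpace X]
    {m : ℕ} (hm : 2 ≤ m) (f : Fin m → X ≃ X)
    (c : ℝ) (hc0 : 0 ≤ c) (hc1 : c < 1)
    (hlip : ∀ i : Fin m, ∀ x y : X, dist (f i x) (f i y) ≤ c * dist x y)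
    (A : Set X) (hAne : A.Nonempty) (hAcp : IsCompact A)
    (hA : A = ⋃ i : Fin m, (f i : X → X) '' A)
    (π : (ℕ → Fin m) → X)
    (hπ : ∀ (j : ℕ → Fin m) (x : X),
      Filter.Tendsto (fun N => compN f j N x) Filter.atTop (nhds (π j)))
    (τ : X → (ℕ → Fin m))
    (hτ : ∀ x ∈ A, π (τ x) = x ∧ ∀ k : ℕ → Fin m, π k = x → lexLe k (τ x)) :
    ((fun j : ℕ → Fin m => fun n : ℕ => j (n + 1)) '' (τ '' A) = τ '' A) ∧
    (∀ j ∈ τ '' A, (fun n : ℕ => j (n + 1)) = τ (π (fun n : ℕ => j (n + 1)))) :=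
  top_addresses_shift_invariant_general hm f c hc0 hlip A hAne hAcp hA π hπ τ hτ
end

section
/- For k ∈ Σ_top and n ∈ ℕ, f_{k1}(π_{top,n−1}(σ(k)|{n−1})) ⊇ π_{top,n}(k|n), where π_{top,n}(k|n) = {x ∈ f_{k|n}(A) : x ∉ f_{c|n}(A) for all c|n > k|n in Σ_{top,n}}. -/
/-- Strict lexicographic order on words of length n. -/
def wLt {m n : ℕ} (w v : Fin n → Fin m) : Prop :=
  ∃ i : Fin n, (∀ j : Fin n, j < i → w j = v j) ∧ w i < v i

/-- `wordComp f w = f_{w 0} ∘ f_{w 1} ∘ ⋯ ∘ f_{w (n-1)}`. -/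
def wordComp {m n : ℕ} {E : Type*} (f : Fin m → E ≃ E) (w : Fin n → Fin m) : E → E :=
  (List.ofFn w).foldr (fun i g => (f i : E → E) ∘ g) id

/-- `piTop f A Stop w = {x ∈ f_w(A) : x ∉ f_v(A) for all v ∈ Σ_{top,n} with v > w}`. -/
def piTop {m n : ℕ} {E : Type*} (f : Fin m → E ≃ E) (A : Set E)
    (Stop : Set (ℕ → Fin m)) (w : Fin n → Fin m) : Set E :=
  {x | x ∈ wordComp f w '' A ∧
    ∀ v : Fin n → Fin m, (∃ k ∈ Stop, ∀ i : Fin n, v i = k (i : ℕ)) →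
      wLt w v → x ∉ wordComp f v '' A}

open Filter


lemma wordComp_succ' {m n : ℕ} {E : Type*} (f : Fin m → E ≃ E) (w : Fin (n+1) → Fin m) :
    wordComp f w = (f (w 0) : E → E) ∘ wordComp f (fun i => w i.succ) := by
  simp [wordComp, List.ofFn_succ]

lemma wordComp_zero' {m : ℕ} {E : Type*} (f : Fin m → E ≃ E) (w : Fin 0 → Fin m) :
    wordComp f w = id := by simp [wordComp]

lemma wLt_trans' {m n : ℕ} {w u v : Fin n → Fin m} (h1 : wLt w u) (h2 : wLt u v) :
    wLt w v := by
  obtain ⟨i1, ha1, hl1⟩ := h1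
  obtain ⟨i2, ha2, hl2⟩ := h2
  rcases lt_trichotomy i1 i2 with h | h | h
  · exact ⟨i1, fun j hj => (ha1 j hj).trans (ha2 j (hj.trans h)),
      hl1.trans_le (le_of_eq (ha2 i1 h))⟩
  · subst h
    exact ⟨i1, fun j hj => (ha1 j hj).trans (ha2 j hj), hl1.trans hl2⟩
  · exact ⟨i2, fun j hj => (ha1 j (hj.trans h)).trans (ha2 j hj),
      (ha1 i2 h).trans_lt hl2⟩

section Aux
variable {X : Type*} [MetricSpace X] {m : ℕ}

lemma pi_shift' (f : Fin m → X ≃ X) (π : (ℕ → Fin m) → X)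
    (hπ : ∀ j x, Tendsto (fun N => compN f j N x) atTop (nhds (π j)))
    (hcont : ∀ i, Continuous (f i : X → X)) (x₀ : X) (j : ℕ → Fin m) :
    π j = f (j 0) (π (fun i => j (i + 1))) := by
  have h2 : Tendsto (fun N => compN f j (N+1) x₀) atTop (nhds (π j)) :=
    (hπ j x₀).comp (tendsto_add_atTop_nat 1)
  have h3 : Tendsto (fun N => f (j 0) (compN f (fun i => j (i+1)) N x₀)) atTop
      (nhds (f (j 0) (π (fun i => j (i+1))))) :=
    ((hcont (j 0)).tendsto _).comp (hπ _ x₀)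
  exact tendsto_nhds_unique h2 h3

lemma compN_mem' (f : Fin m → X ≃ X) {A : Set X}
    (hA : A = ⋃ i : Fin m, (f i : X → X) '' A)
    {a : X} (ha : a ∈ A) : ∀ (N : ℕ) (j : ℕ → Fin m), compN f j N a ∈ A := by
  intro N
  induction N with
  | zero => intro j; exact ha
  | succ N ih =>
    intro j
    have h : compN f j (N+1) a = f (j 0) (compN f (fun i => j (i+1)) N a) := rfl
    rw [h, hA]
    exact Set.mem_iUnion.2 ⟨j 0, Set.mem_image_of_mem _ (ih _)⟩

lemma pi_mem' (f : Fin m → X ≃ X) {A : Set X} (hAcp : IsCompact A)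
    (hA : A = ⋃ i : Fin m, (f i : X → X) '' A) {a : X} (ha : a ∈ A)
    (π : (ℕ → Fin m) → X)
    (hπ : ∀ j x, Tendsto (fun N => compN f j N x) atTop (nhds (π j)))
    (j : ℕ → Fin m) : π j ∈ A :=
  hAcp.isClosed.mem_of_tendsto (hπ j a)
    (Filter.Eventually.of_forall fun N => compN_mem' f hA ha N j)

lemma pi_prefix' (f : Fin m → X ≃ X) (π : (ℕ → Fin m) → X)
    (hπ : ∀ j x, Tendsto (fun N => compN f j N x) atTop (nhds (π j)))
    (hcont : ∀ i, Continuous (f i : X → X)) (x₀ : X) :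
    ∀ (N : ℕ) (j : ℕ → Fin m),
      π j = wordComp f (fun i : Fin N => j (i : ℕ)) (π (fun i => j (N + i))) := by
  intro N
  induction N with
  | zero =>
    intro j
    rw [wordComp_zero']
    simp
  | succ N ih =>
    intro j
    rw [wordComp_succ']
    have h1 : π j = f (j 0) (π (fun i => j (i + 1))) := pi_shift' f π hπ hcont x₀ j
    have h2 := ih (fun i => j (i + 1))
    rw [h1, h2]
    simp only [Function.comp_apply]
    have h4 : (fun i : Fin N => j ((i.succ : Fin (N+1)) : ℕ)) = fun i : Fin N => j ((i:ℕ)+1) := by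
      funext i; rw [Fin.val_succ]
    have h5 : (fun i => j (N + i + 1) : ℕ → Fin m) = fun i => j (N + 1 + i) := by
      funext i; congr 1; omega
    rw [h4, h5]
    rfl
end Aux

/-- For k ∈ Σ_top and n ∈ ℕ, `f_{k1}(π_{top,n−1}(σ(k)|(n−1))) ⊇ π_{top,n}(k|n)`. -/
theorem piTop_subset_image_shift {X : Type*} [MetricSpace X] [CompleteSpace X]
    {m : ℕ} (hm : 2 ≤ m) (f : Fin m → X ≃ X)
    (c : ℝ) (hc0 : 0 ≤ c) (hc1 : c < 1)
    (hlip : ∀ i : Fin m, ∀ x y : X, dist (f i x) (f i y) ≤ c * dist x y)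
    (A : Set X) (hAne : A.Nonempty) (hAcp : IsCompact A)
    (hA : A = ⋃ i : Fin m, (f i : X → X) '' A)
    (π : (ℕ → Fin m) → X)
    (hπ : ∀ (j : ℕ → Fin m) (x : X),
      Filter.Tendsto (fun N => compN f j N x) Filter.atTop (nhds (π j)))
    (τ : X → (ℕ → Fin m))
    (hτ : ∀ x ∈ A, π (τ x) = x ∧ ∀ k : ℕ → Fin m, π k = x → lexLe k (τ x))
    (k : ℕ → Fin m) (hk : k ∈ τ '' A) (n : ℕ) :
    piTop f A (τ '' A) (fun i : Fin (n + 1) => k (i : ℕ)) ⊆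
      (f (k 0) : X → X) ''
        piTop f A (τ '' A) (fun i : Fin n => k ((i : ℕ) + 1)) := by
  obtain ⟨a₀, ha₀⟩ := hAne
  have hcont : ∀ i, Continuous (f i : X → X) := by
    intro i
    refine (LipschitzWith.of_dist_le_mul (K := c.toNNReal) ?_).continuous
    intro x y
    rw [Real.coe_toNNReal c hc0]
    exact hlip i x y
  intro x hx
  obtain ⟨hx1, hx2⟩ := hx
  -- decompose the first word
  have hword : wordComp f (fun i : Fin (n+1) => k (i : ℕ)) =
      (f (k 0) : X → X) ∘ wordComp f (fun i : Fin n => k ((i : ℕ) + 1)) := by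
    rw [wordComp_succ']
    rfl
  rw [hword] at hx1
  obtain ⟨a, ha, hax⟩ := hx1
  set sw : Fin n → Fin m := fun i : Fin n => k ((i : ℕ) + 1) with hsw
  set y : X := wordComp f sw a with hy
  refine ⟨y, ⟨⟨a, ha, rfl⟩, ?_⟩, hax⟩
  -- y satisfies the exclusion property
  intro v hvS hlt hyv
  obtain ⟨k', hk'S, hvk'⟩ := hvS
  obtain ⟨a', ha', hva'⟩ := hyv
  -- the infinite word jx = (k 0) :: v ++ τ a'
  set jx : ℕ → Fin m := fun N =>
    if h : N < n + 1 then (Fin.cons (k 0) v : Fin (n+1) → Fin m) ⟨N, h⟩ else τ a' (N - (n + 1)) with hjx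
  have hjx_prefix : (fun i : Fin (n+1) => jx (i : ℕ)) = Fin.cons (k 0) v := by
    funext i
    simp only [hjx, i.isLt, dif_pos, Fin.eta]
  have hjx_tail : (fun i => jx (n + 1 + i)) = τ a' := by
    funext i
    simp only [hjx]
    have hsub : n + 1 + i - (n + 1) = i := by omega
    rw [dif_neg (by omega), hsub]
  have hconsword : wordComp f (Fin.cons (k 0) v) =
      (f (k 0) : X → X) ∘ wordComp f v := by
    have hv : (fun i : Fin n => (Fin.cons (k 0) v : Fin (n+1) → Fin m) i.succ) = v := by
      funext i; simp
    rw [wordComp_succ', Fin.cons_zero, hv]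
  -- π jx = x
  have hπa' : π (τ a') = a' := (hτ a' ha').1
  have hπjx : π jx = x := by
    rw [pi_prefix' f π hπ hcont a₀ (n+1) jx, hjx_prefix, hjx_tail, hπa', hconsword,
      Function.comp_apply, hva']
    exact hax
  have hxA : x ∈ A := hπjx ▸ pi_mem' f hAcp hA ha₀ π hπ jx
  have hτx := hτ x hxA
  have hmax : lexLe jx (τ x) := hτx.2 jx hπjx
  -- wLt (k|n+1) (cons (k 0) v)
  have hW0 : wLt (fun i : Fin (n+1) => k (i : ℕ)) (Fin.cons (k 0) v) := by
    obtain ⟨i, hag, hi⟩ := hlt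
    refine ⟨i.succ, ?_, ?_⟩
    · intro j hj
      rcases Fin.eq_zero_or_eq_succ j with rfl | ⟨j', rfl⟩
      · simp
      · have hj'i : j' < i := by rwa [Fin.succ_lt_succ_iff] at hj
        simpa [Fin.cons_succ, Fin.val_succ] using hag j' hj'i
    · simpa [Fin.cons_succ, Fin.val_succ] using hi
  -- derive wLt (k|n+1) (τ x | n+1)
  have hW : wLt (fun i : Fin (n+1) => k (i : ℕ)) (fun i : Fin (n+1) => τ x (i : ℕ)) := by
    rcases hmax with heq | ⟨n₀, hagr, hlt₀⟩
    · have : (fun i : Fin (n+1) => τ x (i : ℕ)) = Fin.cons (k 0) v := by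
        rw [← heq]; exact hjx_prefix
      rw [this]; exact hW0
    · by_cases hn₀ : n₀ < n + 1
      · have hmid : wLt (fun i : Fin (n+1) => jx (i : ℕ)) (fun i : Fin (n+1) => τ x (i : ℕ)) :=
          ⟨⟨n₀, hn₀⟩, fun j hj => hagr j hj, hlt₀⟩
        exact wLt_trans' (hjx_prefix ▸ hW0) hmid
      · have : (fun i : Fin (n+1) => τ x (i : ℕ)) = Fin.cons (k 0) v := by
          rw [← hjx_prefix]
          funext i
          exact (hagr i (by omega)).symm
        rw [this]; exact hW0
  -- contradiction via hx2
  have hmemb : x ∈ wordComp f (fun i : Fin (n+1) => τ x (i : ℕ)) '' A := by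
    have h := pi_prefix' f π hπ hcont a₀ (n+1) (τ x)
    rw [hτx.1] at h
    exact ⟨π (fun i => τ x (n + 1 + i)), pi_mem' f hAcp hA ha₀ π hπ _, h.symm⟩
  exact hx2 (fun i : Fin (n+1) => τ x (i : ℕ)) ⟨τ x, ⟨x, hxA, rfl⟩, fun i => rfl⟩ hW hmemb
end

section
/- For an i.f.s. of similitudes f_j(x) = rx + b_j on ℝⁿ with common ratio 0 < r < 1, the blowup 𝒜(1̄) = ⋃_{n≥1} (f_1^{-1})^n(A) equals the Minkowski sum A + D, where D is the forward orbit of 0 (including 0) under the maps t_j(x) = r^{-1}(x + b_j − b_1), j = 1,…,m, and D satisfies D = ⋃_j t_j(D). -/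
open Pointwise

/-- Iterated images of `{0}` under the maps `t j`: the "levels" of the orbit. -/
private def Dseq {E : Type*} [Zero E] {m : ℕ} (t : Fin m → E → E) : ℕ → Set E
  | 0 => {0}
  | n + 1 => ⋃ j, t j '' Dseq t n

/-- For the i.f.s. f_j(x) = rx + b_j on ℝⁿ with common ratio 0 < r < 1, the
blowup 𝒜(1̄) = ⋃_{n≥1} (f_1⁻¹)ⁿ(A) equals the Minkowski sum A + D, where D is
the forward orbit of 0 (including 0) under the maps t_j(x) = r⁻¹(x + b_j − b_1),
and D satisfies D = ⋃_j t_j(D). -/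
theorem blowup_eq_attractor_add_invariant_set {d m : ℕ} (hm : 0 < m)
    (r : ℝ) (hr0 : 0 < r) (hr1 : r < 1)
    (b : Fin m → EuclideanSpace ℝ (Fin d))
    (A : Set (EuclideanSpace ℝ (Fin d))) (hAne : A.Nonempty) (hAcp : IsCompact A)
    (hA : A = ⋃ j : Fin m, (fun x => r • x + b j) '' A)
    (D : Set (EuclideanSpace ℝ (Fin d)))
    (hD : D = ⋂₀ {S : Set (EuclideanSpace ℝ (Fin d)) |
      (0 : EuclideanSpace ℝ (Fin d)) ∈ S ∧
        ∀ j : Fin m, ∀ x ∈ S, r⁻¹ • (x + b j - b ⟨0, hm⟩) ∈ S}) :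
    (⋃ n : ℕ, ⋃ _ : 1 ≤ n, (fun x => r⁻¹ • (x - b ⟨0, hm⟩))^[n] '' A) = A + D ∧
    D = ⋃ j : Fin m, (fun x => r⁻¹ • (x + b j - b ⟨0, hm⟩)) '' D := by
  classical
  have hrne : r ≠ 0 := ne_of_gt hr0
  set t : Fin m → EuclideanSpace ℝ (Fin d) → EuclideanSpace ℝ (Fin d) :=
    fun j x => r⁻¹ • (x + b j - b ⟨0, hm⟩) with ht
  set g : EuclideanSpace ℝ (Fin d) → EuclideanSpace ℝ (Fin d) :=
    fun x => r⁻¹ • (x - b ⟨0, hm⟩) with hg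
  -- every level is contained in every admissible set
  have horbit : ∀ n, ∀ S, ((0 : EuclideanSpace ℝ (Fin d)) ∈ S ∧
      ∀ j : Fin m, ∀ x ∈ S, t j x ∈ S) → Dseq t n ⊆ S := by
    intro n
    induction n with
    | zero =>
      intro S hS x hx
      simp only [Dseq, Set.mem_singleton_iff] at hx
      exact hx ▸ hS.1
    | succ n ih =>
      intro S hS x hx
      simp only [Dseq, Set.mem_iUnion] at hx
      obtain ⟨j, y, hy, rfl⟩ := hx
      exact hS.2 j y (ih S hS hy)
  -- D is the union of the levels
  have hDeq : D = ⋃ n, Dseq t n := by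
    rw [hD]
    apply subset_antisymm
    · apply Set.sInter_subset_of_mem
      constructor
      · exact Set.mem_iUnion.2 ⟨0, rfl⟩
      · intro j x hx
        obtain ⟨n, hn⟩ := Set.mem_iUnion.1 hx
        exact Set.mem_iUnion.2 ⟨n + 1, Set.mem_iUnion.2 ⟨j, x, hn, rfl⟩⟩
    · intro x hx
      obtain ⟨n, hn⟩ := Set.mem_iUnion.1 hx
      exact fun S hS => horbit n S hS hn
  have ht10 : t ⟨0, hm⟩ 0 = 0 := by
    simp [ht]
  -- the self-similarity of D
  have hDself : D = ⋃ j : Fin m, t j '' D := by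
    apply subset_antisymm
    · rw [hDeq]
      intro x hx
      obtain ⟨n, hn⟩ := Set.mem_iUnion.1 hx
      match n, hn with
      | 0, hn =>
        simp only [Dseq, Set.mem_singleton_iff] at hn
        subst hn
        exact Set.mem_iUnion.2 ⟨⟨0, hm⟩, 0, Set.mem_iUnion.2 ⟨0, rfl⟩, ht10⟩
      | n + 1, hn =>
        simp only [Dseq, Set.mem_iUnion] at hn
        obtain ⟨j, y, hy, rfl⟩ := hn
        exact Set.mem_iUnion.2 ⟨j, y, Set.mem_iUnion.2 ⟨n, hy⟩, rfl⟩
    · intro x hx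
      obtain ⟨j, hj⟩ := Set.mem_iUnion.1 hx
      obtain ⟨y, hy, rfl⟩ := hj
      rw [hDeq] at hy ⊢
      obtain ⟨n, hn⟩ := Set.mem_iUnion.1 hy
      exact Set.mem_iUnion.2 ⟨n + 1, Set.mem_iUnion.2 ⟨j, y, hn, rfl⟩⟩
  -- key algebraic identity
  have halg : ∀ (a v : EuclideanSpace ℝ (Fin d)) (j : Fin m),
      g ((r • a + b j) + v) = a + t j v := by
    intro a v j
    have h1 : (r • a + b j) + v - b ⟨0, hm⟩ = r • a + (v + b j - b ⟨0, hm⟩) := by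
      abel
    simp only [hg, ht, h1, smul_add, inv_smul_smul₀ hrne]
  -- images of A under iterates of g
  have hkey : ∀ n, g^[n] '' A = A + Dseq t n := by
    intro n
    induction n with
    | zero =>
      ext x
      simp [Dseq, Set.mem_add]
    | succ n ih =>
      rw [Function.iterate_succ', Set.image_comp, ih]
      ext x
      constructor
      · rintro ⟨y, hy, rfl⟩
        obtain ⟨a', ha', v, hv, rfl⟩ := Set.mem_add.1 hy
        have ha'' := ha'
        rw [hA] at ha''
        obtain ⟨j, hj⟩ := Set.mem_iUnion.1 ha''
        obtain ⟨a, ha, rfl⟩ := hj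
        rw [halg a v j]
        exact Set.add_mem_add ha (Set.mem_iUnion.2 ⟨j, v, hv, rfl⟩)
      · intro hx
        obtain ⟨a, ha, w, hw, rfl⟩ := Set.mem_add.1 hx
        simp only [Dseq, Set.mem_iUnion] at hw
        obtain ⟨j, v, hv, rfl⟩ := hw
        refine ⟨(r • a + b j) + v, ?_, halg a v j⟩
        have : r • a + b j ∈ A := by
          rw [hA]
          exact Set.mem_iUnion.2 ⟨j, a, ha, rfl⟩
        exact Set.add_mem_add this hv
  -- g A ⊇ A, hence levels are increasing in the relevant sense: A + Dseq 0 ⊆ A + Dseq 1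
  constructor
  · apply subset_antisymm
    · intro x hx
      simp only [Set.mem_iUnion] at hx
      obtain ⟨n, _, hn⟩ := hx
      rw [hkey n] at hn
      obtain ⟨a, ha, v, hv, rfl⟩ := Set.mem_add.1 hn
      refine Set.add_mem_add ha ?_
      rw [hDeq]
      exact Set.mem_iUnion.2 ⟨n, hv⟩
    · intro x hx
      obtain ⟨a, ha, v, hv, rfl⟩ := Set.mem_add.1 hx
      rw [hDeq] at hv
      obtain ⟨n, hn⟩ := Set.mem_iUnion.1 hv
      -- push v into level n+1 (since t_1 0 = 0 guarantees nothing here; instead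
      -- note Dseq n ⊆ Dseq (n+1) because t ⟨0,hm⟩ fixes... not true in general;
      -- handle n = 0 separately)
      have hlev : ∀ k, 1 ≤ k → v ∈ Dseq t k → a + v ∈
          ⋃ n : ℕ, ⋃ _ : 1 ≤ n, g^[n] '' A := by
        intro k hk hvk
        have : a + v ∈ g^[k] '' A := by
          rw [hkey k]; exact Set.add_mem_add ha hvk
        simp only [Set.mem_iUnion]
        exact ⟨k, hk, this⟩
      match n, hn with
      | 0, hn =>
        simp only [Dseq, Set.mem_singleton_iff] at hn
        subst hn
        refine hlev 1 le_rfl ?_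
        simp only [Dseq]
        exact Set.mem_iUnion.2 ⟨⟨0, hm⟩, 0, rfl, ht10⟩
      | n + 1, hn =>
        exact hlev (n + 1) (Nat.succ_le_succ (Nat.zero_le n)) hn
  · exact hDself
end
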